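/- Let U = f(M) + ε with ε independent of (M, Y(0), Y(1)) and suppose T depends only on U (i.e., T ⟂ (M, Y(0), Y(1)) | U) and E[ε]=0. If in addition Y(t) ⟂ ε | M, then the conditional independence Y(t) ⟂ T | (M, ε) holds, so adjusting for (M, ε) identifies E[Y(t)]; however, Y(t) ⟂ T | M alone need not hold. Formally: Y(t) ⟂ T | (M, ε) follows from T ⟂ (M, Y(0), Y(1)) | U and U being a deterministic function of (M, ε). -/

import Mathlib

open Finset

noncomputable def pr {Ω : Type*} [Fintype Ω] (p : Ω → ℝ) (E : Set Ω) : ℝ :=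
  ∑ ω, E.indicator p ω

noncomputable def cpr {Ω : Type*} [Fintype Ω] (p : Ω → ℝ) (A B : Set Ω) : ℝ :=
  pr p (A ∩ B) / pr p B

noncomputable def ex {Ω : Type*} [Fintype Ω] (p : Ω → ℝ) (X : Ω → ℝ) : ℝ :=
  ∑ ω, p ω * X ω

noncomputable def cex {Ω : Type*} [Fintype Ω] (p : Ω → ℝ) (X : Ω → ℝ) (B : Set Ω) : ℝ :=
  (∑ ω, B.indicator (fun ω' => p ω' * X ω') ω) / pr p B

/-!
Write `X = (M, Y(0), Y(1))`. Given `M = m`, the events `ε = e` and `U = f m + e` coincide, so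
conditioning on `(M, ε) = (m, e)` is conditioning on `U = f m + e` and then on the `X`-event `M = m`.
Independence of `T` from the fibres of `X` given `U` extends, by summing over fibres, to all
`X`-events, and therefore survives the further conditioning on an `X`-event; `Y(t)` is a
function of `X`.
-/

section
variable {Ω β : Type*} [Fintype Ω] (p : Ω → ℝ)

lemma pr_mono (hp : ∀ ω, 0 ≤ p ω) {A B : Set Ω} (h : A ⊆ B) : pr p A ≤ pr p B :=
  sum_le_sum fun ω _ => Set.indicator_le_indicator_of_subset h hp ω

lemma pr_eq_sum_pr_inter_preimage [DecidableEq β] (X : Ω → β) (E : Set Ω) :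
    pr p E = ∑ x ∈ univ.image X, pr p (E ∩ X ⁻¹' {x}) := by
  have fiber (x : β) : pr p (E ∩ X ⁻¹' {x}) = ∑ ω with X ω = x, E.indicator p ω := by
    rw [pr, sum_filter, Set.inter_comm, ← Set.indicator_indicator]
    simp only [Set.indicator, Set.mem_preimage, Set.mem_singleton_iff]
  simp_rw [fiber]
  exact (sum_fiberwise_of_maps_to (fun ω _ => mem_image_of_mem X (mem_univ ω)) _).symm

lemma cpr_eq_sum_cpr_inter_preimage [DecidableEq β] (X : Ω → β) (E C : Set Ω) :
    cpr p E C = ∑ x ∈ univ.image X, cpr p (E ∩ X ⁻¹' {x}) C := by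
  simp only [cpr, pr_eq_sum_pr_inter_preimage p X (E ∩ C), sum_div, Set.inter_right_comm _ C]

lemma cpr_empty (C : Set Ω) : cpr p ∅ C = 0 := by
  simp [cpr, pr]

lemma cpr_inter_preimage_eq_mul {A C : Set Ω} {X : Ω → β}
    (h : ∀ x, cpr p (A ∩ X ⁻¹' {x}) C = cpr p A C * cpr p (X ⁻¹' {x}) C) (S : Set β) :
    cpr p (A ∩ X ⁻¹' S) C = cpr p A C * cpr p (X ⁻¹' S) C := by
  classical
  rw [cpr_eq_sum_cpr_inter_preimage p X, cpr_eq_sum_cpr_inter_preimage p X (X ⁻¹' S), mul_sum]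
  refine sum_congr rfl fun x _ => ?_
  by_cases hx : x ∈ S
  · have hfiber : X ⁻¹' S ∩ X ⁻¹' {x} = X ⁻¹' {x} :=
      Set.inter_eq_right.2 (Set.preimage_mono (Set.singleton_subset_iff.2 hx))
    rw [Set.inter_assoc, hfiber, h]
  · have hfiber : X ⁻¹' S ∩ X ⁻¹' {x} = ∅ := by
      rw [← Set.preimage_inter, Set.inter_singleton_eq_empty.2 hx, Set.preimage_empty]
    rw [Set.inter_assoc, hfiber, Set.inter_empty, cpr_empty, mul_zero]

lemma cpr_inter_eq_div {C : Set Ω} (hC : pr p C ≠ 0) (E F : Set Ω) :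
    cpr p E (F ∩ C) = cpr p (E ∩ F) C / cpr p F C := by
  simp only [cpr, div_div_div_cancel_right₀ hC, Set.inter_assoc]

lemma cpr_preimage_inter_eq_mul_of_condIndep {A C : Set Ω} {X : Ω → β} (hC : pr p C ≠ 0)
    (h : ∀ x, cpr p (A ∩ X ⁻¹' {x}) C = cpr p A C * cpr p (X ⁻¹' {x}) C) (S S₀ : Set β) :
    cpr p (X ⁻¹' S ∩ A) (X ⁻¹' S₀ ∩ C)
      = cpr p (X ⁻¹' S) (X ⁻¹' S₀ ∩ C) * cpr p A (X ⁻¹' S₀ ∩ C) := by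
  have hjoint : X ⁻¹' S ∩ A ∩ X ⁻¹' S₀ = A ∩ X ⁻¹' (S ∩ S₀) := by
    rw [Set.preimage_inter, Set.inter_right_comm, Set.inter_comm _ A]
  simp only [cpr_inter_eq_div p hC, hjoint, ← Set.preimage_inter, cpr_inter_preimage_eq_mul p h]
  rcases eq_or_ne (cpr p (X ⁻¹' S₀) C) 0 with h₀ | h₀
  · simp [h₀]
  · field_simp

end

theorem unconfoundedness_given_image_and_noise_general
    {Ω 𝓜 : Type*} [Fintype Ω]
    (p : Ω → ℝ) (hp : ∀ ω, 0 ≤ p ω)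
    (M : Ω → 𝓜) (ε : Ω → ℝ) (f : 𝓜 → ℝ)
    (U : Ω → ℝ) (hU : ∀ ω, U ω = f (M ω) + ε ω)
    (T : Ω → Bool) (Y0 Y1 : Ω → ℝ)
    (hCI : ∀ (t : Bool) (x : 𝓜 × ℝ × ℝ) (u : ℝ), 0 < pr p {ω | U ω = u} →
      cpr p {ω | T ω = t ∧ (M ω, Y0 ω, Y1 ω) = x} {ω | U ω = u}
        = cpr p {ω | T ω = t} {ω | U ω = u}
          * cpr p {ω | (M ω, Y0 ω, Y1 ω) = x} {ω | U ω = u}) :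
    ∀ (t t' : Bool) (y : ℝ) (m : 𝓜) (e : ℝ),
      0 < pr p {ω | M ω = m ∧ ε ω = e} →
      cpr p {ω | (if t then Y1 ω else Y0 ω) = y ∧ T ω = t'} {ω | M ω = m ∧ ε ω = e}
        = cpr p {ω | (if t then Y1 ω else Y0 ω) = y} {ω | M ω = m ∧ ε ω = e}
          * cpr p {ω | T ω = t'} {ω | M ω = m ∧ ε ω = e} := by
  intro t t' y m e hB
  set X : Ω → 𝓜 × ℝ × ℝ := fun ω => (M ω, Y0 ω, Y1 ω)
  set C : Set Ω := {ω | U ω = f m + e}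
  have hMε : {ω | M ω = m ∧ ε ω = e} = X ⁻¹' {x | x.1 = m} ∩ C := by
    ext ω
    simp only [Set.mem_ofPred_eq, Set.mem_inter_iff, Set.mem_preimage, X, C, hU]
    exact and_congr_right fun hm => by rw [hm, add_right_inj]
  have hC : 0 < pr p C := hB.trans_le (pr_mono p hp (hMε ▸ Set.inter_subset_right))
  rw [hMε]
  exact cpr_preimage_inter_eq_mul_of_condIndep p hC.ne' (fun x => hCI t' x _ hC)
    {x | (if t then x.2.2 else x.2.1) = y} _

/-- Residual-confounding scenario: U = f(M) + ε with T ⟂ (M, Y(0), Y(1)) | U. Since U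
is a deterministic function of the pair (M, ε), conditioning on (M, ε) yields the
conditional independence Y(t) ⟂ T | (M, ε). -/
theorem unconfoundedness_given_image_and_noise
    {Ω 𝓜 : Type*} [Fintype Ω]
    (p : Ω → ℝ) (hp : ∀ ω, 0 ≤ p ω) (hsum : ∑ ω, p ω = 1)
    (M : Ω → 𝓜) (ε : Ω → ℝ) (f : 𝓜 → ℝ)
    (U : Ω → ℝ) (hU : ∀ ω, U ω = f (M ω) + ε ω)
    (T : Ω → Bool) (Y0 Y1 : Ω → ℝ)
    (hCI : ∀ (t : Bool) (x : 𝓜 × ℝ × ℝ) (u : ℝ), 0 < pr p {ω | U ω = u} →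
      cpr p {ω | T ω = t ∧ (M ω, Y0 ω, Y1 ω) = x} {ω | U ω = u}
        = cpr p {ω | T ω = t} {ω | U ω = u}
          * cpr p {ω | (M ω, Y0 ω, Y1 ω) = x} {ω | U ω = u}) :
    ∀ (t t' : Bool) (y : ℝ) (m : 𝓜) (e : ℝ),
      0 < pr p {ω | M ω = m ∧ ε ω = e} →
      cpr p {ω | (if t then Y1 ω else Y0 ω) = y ∧ T ω = t'} {ω | M ω = m ∧ ε ω = e}
        = cpr p {ω | (if t then Y1 ω else Y0 ω) = y} {ω | M ω = m ∧ ε ω = e}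
          * cpr p {ω | T ω = t'} {ω | M ω = m ∧ ε ω = e} :=
  unconfoundedness_given_image_and_noise_general p hp M ε f U hU T Y0 Y1 hCI
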